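/- arXiv:1810.02082 — 4 statements merged into one kernel-verified Lean document; each statement's English description precedes it below -/
import Mathlib

section
/- If a closed walk w in a signed graph (G,τ) is odd (i.e., μ(w) = -1), then the multigraph [w] spanned by the edge terms of w contains a cycle of G which is an odd cycle in (G,τ). -/
variable {V : Type*}

/-- The product of τ(e,u)·τ(e,v) over all edge terms e = uv of a walk in a signed
graph (G,τ), where the sign τ assigns a unit ±1 to each incidence. -/
def walkSign (G : SimpleGraph V) (τ : Sym2 V → V → ℤˣ) :
    {u v : V} → G.Walk u v → ℤˣ
  | _, _, SimpleGraph.Walk.nil => 1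
  | _, _, @SimpleGraph.Walk.cons _ _ a b _ _ p =>
      τ s(a, b) a * τ s(a, b) b * walkSign G τ p

/-- μ of a closed walk: (-1)^(number of unbalanced vertex terms).  A vertex term v
between consecutive edge terms e, e' (cyclically) is unbalanced iff τ(e,v)τ(e',v) = 1,
i.e. contributes the factor -τ(e,v)τ(e',v) = -1; multiplying these factors over all
vertex terms gives μ(w) = (-1)^{length w} · ∏_{edge terms e=uv} τ(e,u)τ(e,v). -/
def mu (G : SimpleGraph V) (τ : Sym2 V → V → ℤˣ) {u v : V} (w : G.Walk u v) : ℤˣ :=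
  (-1) ^ w.length * walkSign G τ w

/-
μ is multiplicative under concatenation and invariant under rotation. A closed walk that
repeats a vertex is, after rotating it to start there, the concatenation of two shorter closed
walks, and one of them is odd if the walk is; so by induction on the length an odd closed walk
contains an odd closed walk without repeated vertices. Such a walk is a cycle, because the
closed walks of length at most two (the trivial walk and an edge traversed back and forth)
are even.
-/
section

open SimpleGraph Walk

variable {G : SimpleGraph V} {τ : Sym2 V → V → ℤˣ}

lemma walkSign_append {u v x : V} (p : G.Walk u v) (q : G.Walk v x) :
    walkSign G τ (p.append q) = walkSign G τ p * walkSign G τ q := by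
  induction p with
  | nil => simp [walkSign]
  | cons h p ih => simp [walkSign, ih, mul_assoc]

lemma mu_append {u v x : V} (p : G.Walk u v) (q : G.Walk v x) :
    mu G τ (p.append q) = mu G τ p * mu G τ q := by
  simp only [mu, walkSign_append, length_append, pow_add]
  exact mul_mul_mul_comm _ _ _ _

lemma mu_rotate [DecidableEq V] {u v : V} (w : G.Walk v v) (h : u ∈ w.support) :
    mu G τ (w.rotate u h) = mu G τ w := by
  conv_rhs => rw [← w.take_spec h]
  rw [rotate, mu_append, mu_append, mul_comm]

lemma mu_eq_one_of_length_le_two {v : V} (w : G.Walk v v) (hw : w.length ≤ 2) :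
    mu G τ w = 1 := by
  match w, hw with
  | .nil, _ => simp [mu, walkSign]
  | .cons h .nil, _ => exact (h.ne rfl).elim
  | .cons _ (.cons _ .nil), _ =>
    simp only [mu, walkSign, length_cons, length_nil, Sym2.eq_swap, mul_one]
    rw [mul_comm (τ _ _) (τ _ _), Int.units_mul_self]
    rfl
  | .cons _ (.cons _ (.cons _ _)), hw => simp at hw

lemma isCycle_of_nodup_of_mu_eq_neg_one {v : V} {w : G.Walk v v}
    (hnd : w.support.tail.Nodup) (hodd : mu G τ w = -1) : w.IsCycle := by
  have hlen : 3 ≤ w.length := by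
    by_contra! h
    exact absurd ((mu_eq_one_of_length_le_two w (by omega)).symm.trans hodd) (by decide)
  rw [isCycle_iff_isPath_tail_and_le_length, isPath_def,
    support_tail_of_not_nil w (not_nil_iff_lt_length.mpr (by omega))]
  exact ⟨hnd, hlen⟩

lemma exists_two_le_count_rotate [DecidableEq V] {v : V} {w : G.Walk v v}
    (hnd : ¬w.support.tail.Nodup) :
    ∃ (u : V) (hu : u ∈ w.support), 2 ≤ (w.rotate u hu).support.tail.count u := by
  obtain ⟨u, hu⟩ := List.exists_duplicate_iff_not_nodup.mpr hnd
  refine ⟨u, List.mem_of_mem_tail hu.mem, ?_⟩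
  rw [(support_rotate w u _).perm.count_eq]
  exact List.duplicate_iff_two_le_count.mp hu

lemma exists_append_eq_of_two_le_count [DecidableEq V] {u : V} {w : G.Walk u u}
    (hcount : 2 ≤ w.support.tail.count u) :
    ∃ w₁ w₂ : G.Walk u u, ¬w₁.Nil ∧ ¬w₂.Nil ∧ w₁.append w₂ = w := by
  cases w with
  | nil => simp at hcount
  | cons hadj p =>
    rw [support_cons, List.tail_cons] at hcount
    have hu : u ∈ p.support := List.count_pos_iff.mp (by omega)
    have hsplit : p.support.count u = 1 + (p.dropUntil u hu).support.tail.count u := by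
      conv_lhs => rw [← p.take_spec hu]
      rw [support_append, List.count_append, count_support_takeUntil_eq_one]
    refine ⟨cons hadj (p.takeUntil u hu), p.dropUntil u hu, not_nil_cons, fun hnil => ?_, ?_⟩
    · rw [eq_nil_iff_nil.mpr hnil] at hsplit
      simp only [support_nil, List.tail_cons, List.count_nil, add_zero] at hsplit
      omega
    · rw [cons_append, take_spec]

lemma exists_shorter_of_mu_append_eq_neg_one {u : V} {w₁ w₂ : G.Walk u u}
    (h₁ : ¬w₁.Nil) (h₂ : ¬w₂.Nil) (hodd : mu G τ (w₁.append w₂) = -1) :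
    ∃ w' : G.Walk u u, w'.length < (w₁.append w₂).length ∧ mu G τ w' = -1 ∧
      w'.edges ⊆ (w₁.append w₂).edges ∧ w'.support ⊆ (w₁.append w₂).support := by
  rw [not_nil_iff_lt_length] at h₁ h₂
  rw [mu_append] at hodd
  rcases Int.units_eq_one_or (mu G τ w₁) with hμ | hμ
  · refine ⟨w₂, by rw [length_append]; omega, by simpa [hμ] using hodd, ?_, ?_⟩
    · exact edges_append w₁ w₂ ▸ List.subset_append_right _ _
    · exact support_subset_support_append_right w₁ w₂
  · refine ⟨w₁, by rw [length_append]; omega, hμ, ?_, ?_⟩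
    · exact edges_append w₁ w₂ ▸ List.subset_append_left _ _
    · exact support_subset_support_append_left w₁ w₂

lemma exists_shorter_of_not_nodup [DecidableEq V] {v : V} {w : G.Walk v v}
    (hnd : ¬w.support.tail.Nodup) (hodd : mu G τ w = -1) :
    ∃ (u : V) (w' : G.Walk u u), w'.length < w.length ∧ mu G τ w' = -1 ∧
      w'.edges ⊆ w.edges ∧ w'.support ⊆ w.support := by
  obtain ⟨u, hu, hcount⟩ := exists_two_le_count_rotate hnd
  obtain ⟨w₁, w₂, h₁, h₂, hw⟩ := exists_append_eq_of_two_le_count hcount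
  rw [← mu_rotate w hu, ← hw] at hodd
  obtain ⟨w', hlen, hμ, hedges, hsupp⟩ := exists_shorter_of_mu_append_eq_neg_one h₁ h₂ hodd
  rw [hw] at hlen hedges hsupp
  refine ⟨u, w', by simpa using hlen, hμ, fun e he => ?_, fun x hx => ?_⟩
  · exact (rotate_edges w u hu).perm.mem_iff.mp (hedges he)
  · exact (mem_support_rotate_iff w u hu).mp (hsupp hx)

end

/-- If a closed walk w in a signed graph (G,τ) is odd (μ(w) = -1), then
the multigraph [w] spanned by the edge terms of w contains a cycle of G which is odd
in (G,τ). -/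
theorem odd_walk_contains_odd_cycle (G : SimpleGraph V) (τ : Sym2 V → V → ℤˣ) (v : V)
    (w : G.Walk v v) (hodd : mu G τ w = -1) :
    ∃ (x : V) (c : G.Walk x x), c.IsCycle ∧ mu G τ c = -1 ∧
      (∀ e ∈ c.edges, e ∈ w.edges) ∧ (∀ y ∈ c.support, y ∈ w.support) := by
  classical
  induction hn : w.length using Nat.strong_induction_on generalizing v with
  | _ n ih =>
    by_cases hnd : w.support.tail.Nodup
    · exact ⟨v, w, isCycle_of_nodup_of_mu_eq_neg_one hnd hodd, hodd, fun _ => id, fun _ => id⟩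
    obtain ⟨u, w', hlen, hodd', hedges, hsupp⟩ := exists_shorter_of_not_nodup hnd hodd
    obtain ⟨x, c, hc, hμ, hce, hcs⟩ := ih _ (hn ▸ hlen) u w' hodd' rfl
    exact ⟨x, c, hc, hμ, fun e he => hedges (hce e he), fun y hy => hsupp (hcs y hy)⟩
end

section
/- Let (G,τ) be a connected signed graph, and let C be a cycle in G that is even in (G,τ), with balanced section-decomposition w₀ + w₁ + ⋯ + w_r. Then the alternating sum Σ_{i=0}^{r} (-1)^i Σ_{e ∈ E(w_i)} A(e) equals the zero vector, where A(e) denotes the column of the incidence matrix A(G,τ) corresponding to the edge e. In particular, the columns of A(G,τ) indexed by the edges of an even cycle are linearly dependent. -/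
variable {V : Type*}

/-- The i-th dart (oriented edge term) of a walk. -/
def dartAt {G : SimpleGraph V} {u v : V} (w : G.Walk u v) (i : Fin w.length) :
    G.Dart :=
  w.darts.get (Fin.cast w.length_darts.symm i)

/-- Cyclic successor on `Fin n`. -/
def csucc {n : ℕ} (i : Fin n) : Fin n := ⟨(i + 1) % n, Nat.mod_lt _ i.pos⟩

/-- The column of the incidence matrix of (G,τ) corresponding to an edge e. -/
def incCol [DecidableEq V] (τ : Sym2 V → V → ℤˣ) (e : Sym2 V) : V → ℚ :=
  fun u => if u ∈ e then ((τ e u : ℤ) : ℚ) else 0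

section Aux

lemma dartAt_fst {G : SimpleGraph V} {u w : V} (p : G.Walk u w) (i : Fin p.length) :
    (dartAt p i).fst = p.support[(i : ℕ)]'(by rw [p.length_support]; omega) := by
  have h2 : (dartAt p i).fst = (p.darts.map (·.fst))[(i:ℕ)]'
      (by simp [p.length_darts]) := by simp [dartAt]
  rw [h2, List.getElem_of_eq p.map_fst_darts, List.getElem_dropLast]

lemma dartAt_snd {G : SimpleGraph V} {u w : V} (p : G.Walk u w) (i : Fin p.length) :
    (dartAt p i).snd = p.support[(i : ℕ)+1]'(by rw [p.length_support]; omega) := by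
  have h2 : (dartAt p i).snd = (p.darts.map (·.snd))[(i:ℕ)]'
      (by simp [p.length_darts]) := by simp [dartAt]
  rw [h2, List.getElem_of_eq p.map_snd_darts, List.getElem_tail]

lemma dartAt_fst_csucc {G : SimpleGraph V} {v : V} (C : G.Walk v v)
    (i : Fin C.length) :
    (dartAt C (csucc i)).fst = (dartAt C i).snd := by
  have hn : 0 < C.length := i.pos
  have hs0 : C.support[0]'(by rw [C.length_support]; omega) = v := by
    rw [List.getElem_of_eq C.support_eq_cons]
    rfl
  have hsl : C.support[C.length]'(by rw [C.length_support]; omega) = v := by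
    have h := C.getLast_support
    rw [List.getLast_eq_getElem] at h
    have hlen : C.support.length - 1 = C.length := by rw [C.length_support]; omega
    simpa only [hlen] using h
  rw [dartAt_fst, dartAt_snd]
  rcases Nat.lt_or_ge ((i:ℕ)+1) C.length with h | h
  · have hm : ((csucc i : Fin C.length) : ℕ) = (i:ℕ)+1 := Nat.mod_eq_of_lt h
    simp only [hm]
  · have heq : (i:ℕ)+1 = C.length := by omega
    have hm : ((csucc i : Fin C.length) : ℕ) = 0 := by
      show ((i:ℕ)+1) % C.length = 0
      rw [heq, Nat.mod_self]
    simp only [hm, heq, hs0, hsl]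

lemma csucc_eq_add {n : ℕ} [NeZero n] (i : Fin n) : csucc i = i + 1 := by
  apply Fin.ext
  show ((i:ℕ)+1) % n = _
  rw [Fin.val_add, Fin.val_one']
  rw [Nat.add_mod_mod]

lemma dartAt_edge_getElem {G : SimpleGraph V} {u w : V} (p : G.Walk u w)
    (i : Fin p.length) :
    (dartAt p i).edge = p.edges[(i:ℕ)]'(by rw [SimpleGraph.Walk.length_edges]; exact i.2) := by
  simp [dartAt, SimpleGraph.Walk.edges]

end Aux

set_option maxHeartbeats 1000000 in
/-- Let C be a cycle of a signed graph (G,τ) which is even, with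
balanced section-decomposition w₀ + ⋯ + w_r.  Assigning to each edge term the
coefficient (±1) recording the parity of the balanced section containing it (the
coefficient flips exactly at the unbalanced vertex terms, which are exactly the
boundaries between the maximal balanced sections), the alternating sum
Σᵢ (-1)^i Σ_{e ∈ E(wᵢ)} A(e) of the corresponding columns of the incidence matrix is
zero; in particular the columns indexed by the edges of C are linearly dependent. -/
theorem even_cycle_columns_dependent [DecidableEq V] (G : SimpleGraph V)
    (τ : Sym2 V → V → ℤˣ) (v : V) (C : G.Walk v v) (hC : C.IsCycle)
    (heven : mu G τ C = 1)
    -- c assigns to each edge term of C the sign (-1)^i of its balanced section: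
    -- it flips exactly at the unbalanced vertex terms (cyclically).
    (c : Fin C.length → ℤˣ)
    (hc : ∀ i : Fin C.length,
      c (csucc i) =
        -(τ (dartAt C i).edge (dartAt C i).toProd.2 *
            τ (dartAt C (csucc i)).edge (dartAt C i).toProd.2) * c i) :
    (∑ i : Fin C.length, ((c i : ℤ) : ℚ) • incCol τ (dartAt C i).edge) = 0 ∧
    ¬ LinearIndependent ℚ (fun e : {e : Sym2 V // e ∈ C.edges} => incCol τ (e : Sym2 V)) := by
  have hn : 0 < C.length := by have := hC.three_le_length; omega
  haveI : NeZero C.length := ⟨hn.ne'⟩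
  -- key unit identity at each junction
  have hkey : ∀ i : Fin C.length,
      ((c (csucc i) : ℤ) : ℚ) * ((τ (dartAt C (csucc i)).edge (dartAt C i).snd : ℤ) : ℚ)
      + ((c i : ℤ) : ℚ) * ((τ (dartAt C i).edge (dartAt C i).snd : ℤ) : ℚ) = 0 := by
    intro i
    have hz := congrArg (Units.val) (hc i)
    simp only [Units.val_mul, Units.val_neg] at hz
    have ht : ((τ (dartAt C (csucc i)).edge (dartAt C i).snd : ℤ)) *
        ((τ (dartAt C (csucc i)).edge (dartAt C i).snd : ℤ)) = 1 := by
      have := congrArg Units.val (Int.units_mul_self (τ (dartAt C (csucc i)).edge (dartAt C i).snd))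
      simpa using this
    have hz' : ((c (csucc i) : ℤ)) * ((τ (dartAt C (csucc i)).edge (dartAt C i).snd : ℤ))
        + ((c i : ℤ)) * ((τ (dartAt C i).edge (dartAt C i).snd : ℤ)) = 0 := by
      rw [hz]
      linear_combination (-(((τ (dartAt C i).edge (dartAt C i).snd : ℤ)) * ((c i : ℤ)))) * ht
    exact_mod_cast hz'
  -- splitting incCol into the two endpoint indicators
  have hsplit : ∀ (i : Fin C.length) (u : V), incCol τ (dartAt C i).edge u =
      (if u = (dartAt C i).fst then ((τ (dartAt C i).edge (dartAt C i).fst : ℤ) : ℚ) else 0)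
      + (if u = (dartAt C i).snd then ((τ (dartAt C i).edge (dartAt C i).snd : ℤ) : ℚ) else 0) := by
    intro i u
    have hne : (dartAt C i).fst ≠ (dartAt C i).snd := (dartAt C i).adj.ne
    show (if u ∈ s((dartAt C i).fst, (dartAt C i).snd) then _ else _) = _
    simp only [Sym2.mem_iff]
    by_cases h1 : u = (dartAt C i).fst
    · subst h1; simp [hne]
    · by_cases h2 : u = (dartAt C i).snd
      · subst h2; simp [Ne.symm hne]
      · simp [h1, h2]
  have hsum : (∑ i : Fin C.length, ((c i : ℤ) : ℚ) • incCol τ (dartAt C i).edge) = 0 := by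
    funext u
    rw [Finset.sum_apply]
    simp only [Pi.smul_apply, smul_eq_mul, Pi.zero_apply]
    calc ∑ i : Fin C.length, ((c i : ℤ) : ℚ) * incCol τ (dartAt C i).edge u
        = ∑ i : Fin C.length,
          (((c i : ℤ) : ℚ) * (if u = (dartAt C i).fst then ((τ (dartAt C i).edge (dartAt C i).fst : ℤ) : ℚ) else 0)
          + ((c i : ℤ) : ℚ) * (if u = (dartAt C i).snd then ((τ (dartAt C i).edge (dartAt C i).snd : ℤ) : ℚ) else 0)) := by
          refine Finset.sum_congr rfl fun i _ => ?_
          rw [hsplit i u, mul_add]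
      _ = ∑ i : Fin C.length, ((c i : ℤ) : ℚ) * (if u = (dartAt C i).fst then ((τ (dartAt C i).edge (dartAt C i).fst : ℤ) : ℚ) else 0)
          + ∑ i : Fin C.length, ((c i : ℤ) : ℚ) * (if u = (dartAt C i).snd then ((τ (dartAt C i).edge (dartAt C i).snd : ℤ) : ℚ) else 0) :=
          Finset.sum_add_distrib
      _ = ∑ i : Fin C.length, ((c (csucc i) : ℤ) : ℚ) *
            (if u = (dartAt C i).snd then ((τ (dartAt C (csucc i)).edge (dartAt C i).snd : ℤ) : ℚ) else 0)
          + ∑ i : Fin C.length, ((c i : ℤ) : ℚ) * (if u = (dartAt C i).snd then ((τ (dartAt C i).edge (dartAt C i).snd : ℤ) : ℚ) else 0) := by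
          congr 1
          rw [← Equiv.sum_comp (Equiv.addRight (1 : Fin C.length))
            (fun i => ((c i : ℤ) : ℚ) * (if u = (dartAt C i).fst then ((τ (dartAt C i).edge (dartAt C i).fst : ℤ) : ℚ) else 0))]
          refine Finset.sum_congr rfl fun i _ => ?_
          have h1 : (Equiv.addRight (1 : Fin C.length)) i = csucc i := (csucc_eq_add i).symm
          have h2 : (dartAt C (csucc i)).fst = (dartAt C i).snd := dartAt_fst_csucc C i
          simp only [h1, h2]
      _ = ∑ i : Fin C.length,
            (((c (csucc i) : ℤ) : ℚ) * ((τ (dartAt C (csucc i)).edge (dartAt C i).snd : ℤ) : ℚ)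
          + ((c i : ℤ) : ℚ) * ((τ (dartAt C i).edge (dartAt C i).snd : ℤ) : ℚ)) *
            (if u = (dartAt C i).snd then (1:ℚ) else 0) := by
          rw [← Finset.sum_add_distrib]
          refine Finset.sum_congr rfl fun i _ => ?_
          by_cases h : u = (dartAt C i).snd <;> simp [h] <;> ring
      _ = 0 := by
          refine Finset.sum_eq_zero fun i _ => ?_
          rw [hkey i, zero_mul]
  refine ⟨hsum, ?_⟩
  intro hli
  have hmem : ∀ i : Fin C.length, (dartAt C i).edge ∈ C.edges := by
    intro i
    rw [dartAt_edge_getElem]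
    exact List.getElem_mem _
  have hginj : Function.Injective
      (fun i : Fin C.length => (⟨(dartAt C i).edge, hmem i⟩ : {x : Sym2 V // x ∈ C.edges})) := by
    intro i j hij
    have h1 : (dartAt C i).edge = (dartAt C j).edge := congrArg Subtype.val hij
    rw [dartAt_edge_getElem, dartAt_edge_getElem] at h1
    exact Fin.ext ((hC.edges_nodup.getElem_inj_iff).mp h1)
  have hli2 : LinearIndependent ℚ (fun i : Fin C.length => incCol τ (dartAt C i).edge) :=
    hli.comp (fun i : Fin C.length => (⟨(dartAt C i).edge, hmem i⟩ : {x : Sym2 V // x ∈ C.edges})) hginj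
  have hzero := Fintype.linearIndependent_iff.mp hli2 (fun i => ((c i : ℤ) : ℚ)) hsum ⟨0, hn⟩
  have hne : ((c ⟨0, hn⟩ : ℤ) : ℚ) ≠ 0 := by
    rcases Int.units_eq_one_or (c ⟨0, hn⟩) with h | h <;> simp [h]
  exact hne hzero
end

section
/- If w is an even closed walk in a signed graph (G,τ), then the binomial B_w associated with w belongs to the toric ideal I_{(G,τ)}. -/
variable {V : Type*}

/-- `FlipRel G τ w κ`: κ assigns a sign ±1 to each edge term of the closed walk w,
flipping exactly at the unbalanced vertex terms (cyclically).  Such a κ records (up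
to a global sign) the parity of the balanced section containing each edge term in the
balanced section-decomposition of w, and a κ satisfying this relation exists iff w is
even. -/
def FlipRel (G : SimpleGraph V) (τ : Sym2 V → V → ℤˣ) {v : V} (w : G.Walk v v)
    (κ : Fin w.length → ℤˣ) : Prop :=
  ∀ i : Fin w.length,
    κ (csucc i) =
      -(τ (dartAt w i).edge (dartAt w i).toProd.2 *
          τ (dartAt w (csucc i)).edge (dartAt w i).toProd.2) * κ i

open MvPolynomial in
/-- The positive monomial B_w⁺ of the binomial associated with an even closed walk w,
relative to the section-parity assignment κ: the product of all edge terms lying in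
the sections with κ = 1. -/
noncomputable def Bpos (K : Type*) [Field K] {G : SimpleGraph V} {v : V}
    (w : G.Walk v v) (κ : Fin w.length → ℤˣ) : MvPolynomial G.edgeSet K :=
  ∏ i ∈ Finset.univ.filter (fun i => κ i = 1),
    X (⟨(dartAt w i).edge, (dartAt w i).edge_mem⟩ : G.edgeSet)

open MvPolynomial in
/-- The negative monomial B_w⁻: the product of all edge terms in sections with κ = -1. -/
noncomputable def Bneg (K : Type*) [Field K] {G : SimpleGraph V} {v : V}
    (w : G.Walk v v) (κ : Fin w.length → ℤˣ) : MvPolynomial G.edgeSet K :=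
  ∏ i ∈ Finset.univ.filter (fun i => κ i = -1),
    X (⟨(dartAt w i).edge, (dartAt w i).edge_mem⟩ : G.edgeSet)

open MvPolynomial in
/-- The toric ideal I_{(G,τ)} of a signed graph: the ideal of K[e : e ∈ E(G)]
generated by the binomials e^{b⁺} - e^{b⁻} over integer vectors b in the kernel of
the incidence matrix A(G,τ). -/
noncomputable def toricIdeal (K : Type*) [Field K] [DecidableEq V]
    (G : SimpleGraph V) [Fintype G.edgeSet] (τ : Sym2 V → V → ℤˣ) :
    Ideal (MvPolynomial G.edgeSet K) :=
  Ideal.span { f | ∃ b : G.edgeSet → ℤ,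
    (∀ v : V, ∑ e : G.edgeSet,
      (if v ∈ (e : Sym2 V) then (τ e v : ℤ) else 0) * b e = 0) ∧
    f = (∏ e : G.edgeSet, X e ^ (b e).toNat)
      - ∏ e : G.edgeSet, X e ^ (-(b e)).toNat }


section Aux

open SimpleGraph

lemma darts_get_fst {G : SimpleGraph V} {u v : V} (p : G.Walk u v) :
    ∀ (i : Fin p.darts.length), (p.darts.get i).toProd.1 = p.getVert i := by
  induction p with
  | nil => exact fun i => absurd i.2 (by simp)
  | cons h p ih =>
    rintro ⟨j, hj⟩
    cases j with
    | zero => rfl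
    | succ j =>
      have := ih ⟨j, by simpa using hj⟩
      simpa [SimpleGraph.Walk.getVert_cons_succ] using this

lemma darts_get_snd {G : SimpleGraph V} {u v : V} (p : G.Walk u v) :
    ∀ (i : Fin p.darts.length), (p.darts.get i).toProd.2 = p.getVert (i + 1) := by
  induction p with
  | nil => exact fun i => absurd i.2 (by simp)
  | cons h p ih =>
    rintro ⟨j, hj⟩
    cases j with
    | zero =>
      simp [SimpleGraph.Walk.getVert_cons_succ, SimpleGraph.Walk.getVert_zero]
    | succ j =>
      have := ih ⟨j, by simpa using hj⟩
      simpa [SimpleGraph.Walk.getVert_cons_succ] using this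

lemma dartAt_fst_s9 {G : SimpleGraph V} {u v : V} (w : G.Walk u v) (i : Fin w.length) :
    (dartAt w i).toProd.1 = w.getVert i :=
  darts_get_fst (p := w) _

lemma dartAt_snd_s9 {G : SimpleGraph V} {u v : V} (w : G.Walk u v) (i : Fin w.length) :
    (dartAt w i).toProd.2 = w.getVert (i + 1) :=
  darts_get_snd (p := w) _

/-- The wrap-around chain property for a closed walk. -/
lemma dartAt_csucc_fst {G : SimpleGraph V} {v : V} (w : G.Walk v v) (i : Fin w.length) :
    (dartAt w (csucc i)).toProd.1 = (dartAt w i).toProd.2 := by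
  rw [dartAt_fst_s9, dartAt_snd_s9]
  show w.getVert (((i : ℕ) + 1) % w.length) = w.getVert ((i : ℕ) + 1)
  rcases eq_or_lt_of_le (Nat.succ_le_of_lt i.2) with h | h
  · have h' : (i : ℕ) + 1 = w.length := h
    rw [h', Nat.mod_self, SimpleGraph.Walk.getVert_zero, SimpleGraph.Walk.getVert_length]
  · rw [Nat.mod_eq_of_lt h]

lemma csucc_bijective {n : ℕ} : Function.Bijective (csucc (n := n)) := by
  refine Finite.injective_iff_bijective.mp ?_
  rintro ⟨a, ha⟩ ⟨b, hb⟩ h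
  simp only [csucc, Fin.mk.injEq] at h
  refine Fin.mk_eq_mk.mpr ?_
  rcases Nat.lt_or_ge (a + 1) n with h1 | h1 <;> rcases Nat.lt_or_ge (b + 1) n with h2 | h2
  · rw [Nat.mod_eq_of_lt h1, Nat.mod_eq_of_lt h2] at h; omega
  · rw [Nat.mod_eq_of_lt h1, show b + 1 = n by omega, Nat.mod_self] at h; omega
  · rw [Nat.mod_eq_of_lt h2, show a + 1 = n by omega, Nat.mod_self] at h; omega
  · omega

end Aux

open MvPolynomial in
/-- If w is an even closed walk in a signed graph (G,τ), then the
binomial B_w associated with w (formed, via any section-parity assignment κ of its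
balanced section-decomposition, as B_w⁺ - B_w⁻) belongs to the toric ideal
I_{(G,τ)}. -/
theorem binomial_mem_toricIdeal [DecidableEq V] (K : Type*) [Field K]
    (G : SimpleGraph V) [Fintype G.edgeSet] (τ : Sym2 V → V → ℤˣ) (v : V)
    (w : G.Walk v v) (heven : mu G τ w = 1)
    (κ : Fin w.length → ℤˣ) (hκ : FlipRel G τ w κ) :
    Bpos K w κ - Bneg K w κ ∈ toricIdeal K G τ := by
  classical
  set edg : Fin w.length → G.edgeSet :=
    fun i => ⟨(dartAt w i).edge, (dartAt w i).edge_mem⟩ with hedg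
  set S1 : Finset (Fin w.length) := Finset.univ.filter (fun i => κ i = 1) with hS1
  set S2 : Finset (Fin w.length) := Finset.univ.filter (fun i => κ i = -1) with hS2
  set p : G.edgeSet → ℕ := fun e => (S1.filter (fun i => edg i = e)).card with hp
  set q : G.edgeSet → ℕ := fun e => (S2.filter (fun i => edg i = e)).card with hq
  set b : G.edgeSet → ℤ := fun e => (p e : ℤ) - (q e : ℤ) with hb
  -- rewrite Bpos and Bneg fiberwise
  have fiber : ∀ S : Finset (Fin w.length),
      (∏ i ∈ S, (X (edg i) : MvPolynomial G.edgeSet K)) =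
        ∏ e : G.edgeSet, X e ^ (S.filter (fun i => edg i = e)).card := by
    intro S
    rw [← Finset.prod_fiberwise_of_maps_to (g := edg) (t := Finset.univ)
      (fun i _ => Finset.mem_univ _)]
    refine Finset.prod_congr rfl fun e _ => ?_
    rw [Finset.prod_congr rfl (fun i hi => by rw [(Finset.mem_filter.1 hi).2]),
      Finset.prod_const]
  have hBpos : Bpos K w κ = ∏ e : G.edgeSet, X e ^ p e := fiber S1
  have hBneg : Bneg K w κ = ∏ e : G.edgeSet, X e ^ q e := fiber S2
  -- kernel condition
  have hbsum : ∀ e : G.edgeSet,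
      b e = ∑ i : Fin w.length, (if edg i = e then ((κ i : ℤˣ) : ℤ) else 0) := by
    intro e
    have hunion : (Finset.univ : Finset (Fin w.length)) = S1 ∪ S2 := by
      ext i
      rcases Int.units_eq_one_or (κ i) with h | h <;> simp [hS1, hS2, h]
    have hdisj : Disjoint S1 S2 := by
      rw [Finset.disjoint_left]
      intro i hi1 hi2
      rw [hS1, Finset.mem_filter] at hi1
      rw [hS2, Finset.mem_filter] at hi2
      rw [hi1.2] at hi2
      exact absurd hi2.2 (by decide)
    rw [hunion, Finset.sum_union hdisj]
    have h1 : ∑ i ∈ S1, (if edg i = e then ((κ i : ℤˣ) : ℤ) else 0) = (p e : ℤ) := by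
      have step : ∀ i ∈ S1, (if edg i = e then ((κ i : ℤˣ) : ℤ) else 0) =
          (if edg i = e then (1 : ℤ) else 0) := by
        intro i hi
        rw [hS1, Finset.mem_filter] at hi
        rw [hi.2]
        simp
      rw [Finset.sum_congr rfl step, Finset.sum_boole, hp]
    have h2 : ∑ i ∈ S2, (if edg i = e then ((κ i : ℤˣ) : ℤ) else 0) = -(q e : ℤ) := by
      have step : ∀ i ∈ S2, (if edg i = e then ((κ i : ℤˣ) : ℤ) else 0) =
          -(if edg i = e then (1 : ℤ) else 0) := by
        intro i hi
        rw [hS2, Finset.mem_filter] at hi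
        rw [hi.2]
        split <;> simp
      rw [Finset.sum_congr rfl step, Finset.sum_neg_distrib, Finset.sum_boole, hq]
    rw [h1, h2, hb]
    ring
  have hker : ∀ x : V, ∑ e : G.edgeSet,
      (if x ∈ (e : Sym2 V) then ((τ e x : ℤˣ) : ℤ) else 0) * b e = 0 := by
    intro x
    -- swap the order of summation
    have step1 : ∑ e : G.edgeSet,
        (if x ∈ (e : Sym2 V) then ((τ e x : ℤˣ) : ℤ) else 0) * b e =
        ∑ i : Fin w.length,
          (if x ∈ ((edg i : G.edgeSet) : Sym2 V) then ((τ (edg i) x : ℤˣ) : ℤ) else 0)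
            * ((κ i : ℤˣ) : ℤ) := by
      simp_rw [hbsum, Finset.mul_sum]
      rw [Finset.sum_comm]
      refine Finset.sum_congr rfl fun i _ => ?_
      rw [Finset.sum_congr rfl (fun e _ => mul_ite_zero _ _ _)]
      rw [Finset.sum_ite_eq Finset.univ (edg i)
        (fun e => (if x ∈ (e : Sym2 V) then ((τ e x : ℤˣ) : ℤ) else 0) * ((κ i : ℤˣ) : ℤ))]
      simp
    rw [step1]
    -- telescoping via the flip relation
    obtain ⟨F, hFdef⟩ : ∃ F : Fin w.length → ℤ, ∀ j : Fin w.length, F j =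
        if x = (dartAt w j).toProd.1 then
          ((τ (dartAt w j).edge x : ℤˣ) : ℤ) * ((κ j : ℤˣ) : ℤ)
        else 0 := ⟨_, fun j => rfl⟩
    have key : ∀ i : Fin w.length,
        (if x ∈ ((edg i : G.edgeSet) : Sym2 V) then ((τ (edg i) x : ℤˣ) : ℤ) else 0)
          * ((κ i : ℤˣ) : ℤ) = F i - F (csucc i) := by
      intro i
      have hne : (dartAt w i).toProd.1 ≠ (dartAt w i).toProd.2 := (dartAt w i).adj.ne
      have hedge : ((edg i : G.edgeSet) : Sym2 V) = (dartAt w i).edge := rfl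
      have hmem : x ∈ ((edg i : G.edgeSet) : Sym2 V) ↔
          x = (dartAt w i).toProd.1 ∨ x = (dartAt w i).toProd.2 := by
        rw [hedge]
        exact Sym2.mem_iff
      have hcs : (dartAt w (csucc i)).toProd.1 = (dartAt w i).toProd.2 :=
        dartAt_csucc_fst w i
      by_cases h1 : x = (dartAt w i).toProd.1
      · have h2 : x ≠ (dartAt w i).toProd.2 := h1 ▸ hne
        have hFc : F (csucc i) = 0 := by
          rw [hFdef]
          simp only [hcs]
          rw [if_neg h2]
        rw [hFc, if_pos (hmem.mpr (Or.inl h1)), hFdef, if_pos h1, hedge, sub_zero]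
      · by_cases h2 : x = (dartAt w i).toProd.2
        · have hFi : F i = 0 := by rw [hFdef, if_neg h1]
          have hFc : F (csucc i) =
              -(((τ (dartAt w i).edge x : ℤˣ) : ℤ) * ((κ i : ℤˣ) : ℤ)) := by
            rw [hFdef]
            simp only [hcs]
            rw [if_pos h2]
            have hrel := hκ i
            rw [← h2] at hrel
            have hrel' : ((κ (csucc i) : ℤˣ) : ℤ) =
                -((((τ (dartAt w i).edge x : ℤˣ) : ℤ)) *
                  (((τ (dartAt w (csucc i)).edge x : ℤˣ) : ℤ))) * ((κ i : ℤˣ) : ℤ) := by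
              rw [hrel]; push_cast; ring
            rw [hrel']
            have hsq : (((τ (dartAt w (csucc i)).edge x : ℤˣ) : ℤ)) *
                (((τ (dartAt w (csucc i)).edge x : ℤˣ) : ℤ)) = 1 := by
              rw [← Units.val_mul, Int.units_mul_self, Units.val_one]
            linear_combination (-(((τ (dartAt w i).edge x : ℤˣ) : ℤ) * ((κ i : ℤˣ) : ℤ))) * hsq
          rw [hFi, hFc, if_pos (hmem.mpr (Or.inr h2)), hedge]
          ring
        · have hFi : F i = 0 := by rw [hFdef, if_neg h1]
          have hFc : F (csucc i) = 0 := by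
            rw [hFdef]
            simp only [hcs]
            rw [if_neg h2]
          rw [hFi, hFc, if_neg (fun h => (hmem.mp h).elim h1 h2)]
          ring
    rw [Finset.sum_congr rfl (fun i _ => key i), Finset.sum_sub_distrib]
    rw [Fintype.sum_bijective csucc csucc_bijective (fun i => F (csucc i)) F (fun _ => rfl)]
    ring
  -- the generator
  have hgen : ((∏ e : G.edgeSet, X e ^ (b e).toNat)
      - ∏ e : G.edgeSet, X e ^ (-(b e)).toNat : MvPolynomial G.edgeSet K)
      ∈ toricIdeal K G τ := by
    refine Ideal.subset_span ⟨b, ?_, rfl⟩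
    exact hker
  -- factor out the common monomial
  set m : G.edgeSet → ℕ := fun e => min (p e) (q e) with hm
  have hfac : Bpos K w κ - Bneg K w κ =
      (∏ e : G.edgeSet, (X e : MvPolynomial G.edgeSet K) ^ m e) *
        ((∏ e : G.edgeSet, X e ^ (b e).toNat)
          - ∏ e : G.edgeSet, X e ^ (-(b e)).toNat) := by
    rw [hBpos, hBneg, mul_sub, ← Finset.prod_mul_distrib, ← Finset.prod_mul_distrib]
    congr 1
    · refine Finset.prod_congr rfl fun e _ => ?_
      rw [← pow_add]
      congr 1
      show p e = min (p e) (q e) + (((p e : ℤ) - (q e : ℤ)).toNat)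
      omega
    · refine Finset.prod_congr rfl fun e _ => ?_
      rw [← pow_add]
      congr 1
      show q e = min (p e) (q e) + ((-((p e : ℤ) - (q e : ℤ))).toNat)
      omega
  rw [hfac]
  exact Ideal.mul_mem_left _ _ hgen
end

section
/- There exists a sign τ of the complete graph K₄ such that the toric ideal I_{(K₄,τ)} is not a complete intersection. Specifically, labeling V(K₄) = {v₁,v₂,v₃,v₄} with edges e₁=v₁v₂, e₂=v₂v₃, e₃=v₁v₃, e₄=v₁v₄, e₅=v₂v₄, e₆=v₃v₄, the sign with τ(e₄,v₁) = τ(e₅,v₂) = τ(e₆,v₃) = -1 and all other incidence signs +1 yields a toric ideal which is minimally generated by the three binomials e₁e₅ − e₃e₆, e₁e₄ − e₂e₆, e₂e₅ − e₃e₄, whereas the height r(K₄,τ) = |E| − |V| = 2. -/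
/-!
The kernel of the incidence matrix of `(K₄, τ)` is the rank-two lattice `ℤ g₁ ⊕ ℤ g₃`, where
`g₁`, `g₂ = g₁ - g₃`, `g₃` are the exponent vectors of the three quadrics. The plane is covered
by the six cones spanned by cyclically consecutive vectors of `g₁, g₃, -g₂, -g₁, -g₃, g₂`, and
the two vectors spanning a cone are sign-compatible. For a sign-compatible sum `b + c` nothing
cancels, so the binomial of `b + c` is a combination of those of `b` and `c`; hence the three
quadrics generate the toric ideal. They are linearly independent quadrics, and the ideal has no
terms of degree `< 2`, so reading off degree-two coefficients shows that every generating set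
has at least three elements. Every triangle is odd, so the height is `6 - 4 + 0 = 2`.
-/

variable {V : Type*}

/-- The number of connected components of (G,τ) containing no odd closed walk. -/
noncomputable def numBalanced (G : SimpleGraph V) (τ : Sym2 V → V → ℤˣ) : ℕ :=
  Nat.card {c : G.ConnectedComponent //
    ∀ v : V, G.connectedComponentMk v = c → ∀ w : G.Walk v v, mu G τ w = 1}

/-- A signed graph (G,τ) is a complete intersection if its toric ideal is generated
by r(G,τ) = |E(G)| - |V(G)| + (number of components without an odd closed walk)
elements (this number is the height of the toric ideal, and equals the sum over the
connected components of the quantities r of the paper, so this agrees with the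
componentwise definition for disconnected graphs). -/
def IsCI (K : Type*) [Field K] [DecidableEq V] (G : SimpleGraph V)
    [Fintype G.edgeSet] (τ : Sym2 V → V → ℤˣ) : Prop :=
  ∃ s : Finset (MvPolynomial G.edgeSet K),
    Ideal.span (s : Set (MvPolynomial G.edgeSet K)) = toricIdeal K G τ ∧
    (s.card : ℤ) = (Nat.card G.edgeSet : ℤ) - Nat.card V + numBalanced G τ
open MvPolynomial

instance : DecidableRel (⊤ : SimpleGraph (Fin 4)).Adj :=
  fun a b => decidable_of_iff (a ≠ b) (SimpleGraph.top_adj (v := a) (w := b)).symm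

/-- An edge of the complete graph K₄ = ⊤ on Fin 4. -/
def K4edge (a b : Fin 4) (h : a ≠ b) : (⊤ : SimpleGraph (Fin 4)).edgeSet :=
  ⟨s(a, b), (SimpleGraph.mem_edgeSet (G := (⊤ : SimpleGraph (Fin 4)))).mpr ((SimpleGraph.top_adj (v := a) (w := b)).mpr h)⟩

/-- The sign τ of K₄ with τ(e₄,v₁) = τ(e₅,v₂) = τ(e₆,v₃) = -1 (vertices v₁,…,v₄
labelled 0,…,3, e₄ = v₁v₄, e₅ = v₂v₄, e₆ = v₃v₄) and all other incidences +1. -/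
def tauK4 : Sym2 (Fin 4) → Fin 4 → ℤˣ := fun e v =>
  if (e = s(0, 3) ∧ v = 0) ∨ (e = s(1, 3) ∧ v = 1) ∨ (e = s(2, 3) ∧ v = 2)
  then -1 else 1

namespace MvPolynomial

section ToricBinomial

variable {σ R : Type*} [Fintype σ] [CommRing R]

noncomputable def toricBinomial (b : σ → ℤ) : MvPolynomial σ R :=
  ∏ i, X i ^ (b i).toNat - ∏ i, X i ^ (-b i).toNat

theorem toricBinomial_neg (b : σ → ℤ) :
    toricBinomial (-b) = -(toricBinomial b : MvPolynomial σ R) := by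
  simp [toricBinomial]

/-- For sign-compatible `b` and `c` nothing cancels in `x^{(b+c)⁺} - x^{(b+c)⁻}`. -/
theorem toricBinomial_add {b c : σ → ℤ} (h : ∀ i, 0 ≤ b i * c i) :
    toricBinomial (b + c) = (∏ i, X i ^ (c i).toNat) * toricBinomial b
      + (∏ i, X i ^ (-b i).toNat) * (toricBinomial c : MvPolynomial σ R) := by
  have hpos (i) : (b i + c i).toNat = (b i).toNat + (c i).toNat := by
    rcases mul_nonneg_iff.mp (h i) with h | h <;> omega
  have hneg (i) : (-(b i + c i)).toNat = (-b i).toNat + (-c i).toNat := by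
    rcases mul_nonneg_iff.mp (h i) with h | h <;> omega
  simp only [toricBinomial, Pi.add_apply, hpos, hneg, pow_add, Finset.prod_mul_distrib]
  ring

variable {I : Ideal (MvPolynomial σ R)} {b c : σ → ℤ}

theorem toricBinomial_add_mem (h : ∀ i, 0 ≤ b i * c i) (hb : toricBinomial b ∈ I)
    (hc : toricBinomial c ∈ I) : toricBinomial (b + c) ∈ I := by
  rw [toricBinomial_add h]
  exact add_mem (I.mul_mem_left _ hb) (I.mul_mem_left _ hc)

theorem toricBinomial_nsmul_mem (hb : toricBinomial b ∈ I) (n : ℕ) :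
    toricBinomial (n • b) ∈ I := by
  induction n with
  | zero => simp [toricBinomial]
  | succ n ih =>
    rw [succ_nsmul]
    refine toricBinomial_add_mem (fun i => ?_) ih hb
    simpa [mul_assoc] using mul_nonneg n.cast_nonneg (mul_self_nonneg (b i))

theorem toricBinomial_smul_add_smul_mem (h : ∀ i, 0 ≤ b i * c i) (hb : toricBinomial b ∈ I)
    (hc : toricBinomial c ∈ I) {m n : ℤ} (hm : 0 ≤ m) (hn : 0 ≤ n) :
    toricBinomial (m • b + n • c) ∈ I := by
  lift m to ℕ using hm
  lift n to ℕ using hn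
  simp only [natCast_zsmul]
  refine toricBinomial_add_mem (fun i => ?_) (toricBinomial_nsmul_mem hb m)
    (toricBinomial_nsmul_mem hc n)
  simpa [mul_mul_mul_comm] using mul_nonneg (mul_nonneg m.cast_nonneg n.cast_nonneg) (h i)

end ToricBinomial

section VanishingBelow

variable {σ R : Type*} [CommSemiring R]

/-- For finitely many variables this is `𝔪 ^ n`, where `𝔪` is the ideal generated by the
variables. -/
def vanishingBelow (n : ℕ) : Ideal (MvPolynomial σ R) where
  carrier := {f | ∀ d : σ →₀ ℕ, d.degree < n → coeff d f = 0}
  add_mem' hf hg d hd := by simp [hf d hd, hg d hd]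
  zero_mem' _ _ := coeff_zero _
  smul_mem' p f hf d hd := by
    classical
    rw [smul_eq_mul, coeff_mul]
    refine Finset.sum_eq_zero fun ⟨x, y⟩ hxy => ?_
    have hdeg : x.degree + y.degree = d.degree := by
      rw [← map_add, Finset.HasAntidiagonal.mem_antidiagonal.mp hxy]
    rw [hf y (by omega), mul_zero]

theorem coeff_mul_of_mem_vanishingBelow {n : ℕ} {f : MvPolynomial σ R}
    (hf : f ∈ vanishingBelow n) (p : MvPolynomial σ R) {d : σ →₀ ℕ} (hd : d.degree = n) :
    coeff d (p * f) = coeff 0 p * coeff d f := by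
  classical
  rw [coeff_mul, Finset.sum_eq_single_of_mem (0, d) (by simp)]
  rintro ⟨x, y⟩ hxy hne
  have hsum : x + y = d := Finset.HasAntidiagonal.mem_antidiagonal.mp hxy
  have hx : x ≠ 0 := by rintro rfl; simp_all
  have hx_pos : 0 < x.degree := Nat.pos_of_ne_zero ((Finsupp.degree_eq_zero_iff x).not.mpr hx)
  have hdeg : x.degree + y.degree = n := by rw [← map_add, hsum, hd]
  rw [hf y (by omega), mul_zero]

theorem IsHomogeneous.mem_vanishingBelow {f : MvPolynomial σ R} {n : ℕ}
    (hf : f.IsHomogeneous n) : f ∈ vanishingBelow n :=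
  fun _ hd => hf.coeff_eq_zero hd.ne

/-- For `f ∈ vanishingBelow n`, the degree-`n` coefficients of `p * f` only see the constant
term of `p`, so the degree-`n` parts of elements of `I` lie in the `K`-span of those of its
generators. -/
theorem card_le_card_of_span_eq {K : Type*} [Field K] {n : ℕ} {I : Ideal (MvPolynomial σ K)}
    (hI : I ≤ vanishingBelow n) {ι κ : Type*} [Fintype ι] (d : κ → σ →₀ ℕ)
    (hd : ∀ j, (d j).degree = n) (g : ι → MvPolynomial σ K) (hgI : ∀ i, g i ∈ I)
    (hg : LinearIndependent K fun i j => coeff (d j) (g i)) {s : Finset (MvPolynomial σ K)}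
    (hs : Ideal.span s = I) : Fintype.card ι ≤ s.card := by
  classical
  let T : MvPolynomial σ K →ₗ[K] κ → K := LinearMap.pi fun j => lcoeff K (d j)
  have hT : ∀ f ∈ I, T f ∈ Submodule.span K (T '' s) := by
    intro f hf
    rw [← hs] at hf
    induction hf using Submodule.span_induction with
    | mem f hf => exact Submodule.subset_span ⟨f, hf, rfl⟩
    | zero => simp
    | add f g _ _ hf hg => simpa using add_mem hf hg
    | smul p f hfs hf =>
      have hpf : T (p * f) = coeff 0 p • T f := by
        ext j
        simp [T, coeff_mul_of_mem_vanishingBelow (hI (by rwa [← hs])) p (hd j)]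
      simpa [hpf] using Submodule.smul_mem _ _ hf
  calc Fintype.card ι ≤ Fintype.card (s.image T : Set (κ → K)) :=
        linearIndependent_le_span_aux' _ hg _ (by
          rintro _ ⟨i, rfl⟩
          rw [Finset.coe_image]
          exact hT _ (hgI i))
    _ ≤ s.card := by simpa using Finset.card_image_le

end VanishingBelow

end MvPolynomial

section SignedGraph

def incidenceKernel [DecidableEq V] (G : SimpleGraph V) [Fintype G.edgeSet]
    (τ : Sym2 V → V → ℤˣ) : Set (G.edgeSet → ℤ) :=
  {b | ∀ v : V, ∑ e : G.edgeSet, (if v ∈ (e : Sym2 V) then (τ e v : ℤ) else 0) * b e = 0}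

theorem toricIdeal_eq_span_toricBinomial (K : Type*) [Field K] [DecidableEq V]
    (G : SimpleGraph V) [Fintype G.edgeSet] (τ : Sym2 V → V → ℤˣ) :
    toricIdeal K G τ = Ideal.span (toricBinomial '' incidenceKernel G τ) := by
  rw [toricIdeal]
  congr
  ext f
  exact ⟨fun ⟨b, hb, h⟩ => ⟨b, hb, h.symm⟩, fun ⟨b, hb, h⟩ => ⟨b, hb, h.symm⟩⟩

theorem numBalanced_eq_zero_of_forall_exists_mu_ne_one {G : SimpleGraph V}
    {τ : Sym2 V → V → ℤˣ} (h : ∀ v, ∃ w : G.Walk v v, mu G τ w ≠ 1) : numBalanced G τ = 0 := by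
  refine Nat.card_eq_zero.mpr (Or.inl ⟨fun ⟨c, hc⟩ => ?_⟩)
  obtain ⟨v, rfl⟩ := c.exists_rep
  obtain ⟨w, hw⟩ := h v
  exact hw (hc v rfl w)

end SignedGraph

namespace K4

local notation "E₄" => SimpleGraph.edgeSet (⊤ : SimpleGraph (Fin 4))

def e₁ : E₄ := K4edge 0 1 (by decide)
def e₂ : E₄ := K4edge 1 2 (by decide)
def e₃ : E₄ := K4edge 0 2 (by decide)
def e₄ : E₄ := K4edge 0 3 (by decide)
def e₅ : E₄ := K4edge 1 3 (by decide)
def e₆ : E₄ := K4edge 2 3 (by decide)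

theorem univ_edgeSet : (Finset.univ : Finset E₄) = {e₁, e₂, e₃, e₄, e₅, e₆} := by decide

theorem sum_edgeSet {M : Type*} [AddCommMonoid M] (f : E₄ → M) :
    ∑ e, f e = f e₁ + f e₂ + f e₃ + f e₄ + f e₅ + f e₆ := by
  rw [univ_edgeSet]
  simp +decide [Finset.sum_insert, add_assoc]

theorem prod_edgeSet {M : Type*} [CommMonoid M] (f : E₄ → M) :
    ∏ e, f e = f e₁ * f e₂ * f e₃ * f e₄ * f e₅ * f e₆ :=
  sum_edgeSet (M := Additive M) f

theorem mem_incidenceKernel_iff (b : E₄ → ℤ) :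
    b ∈ incidenceKernel ⊤ tauK4 ↔
      b e₁ + b e₃ - b e₄ = 0 ∧ b e₁ + b e₂ - b e₅ = 0 ∧ b e₂ + b e₃ - b e₆ = 0 ∧
        b e₄ + b e₅ + b e₆ = 0 := by
  simp [incidenceKernel, Fin.forall_fin_succ, sum_edgeSet, e₁, e₂, e₃, e₄, e₅, e₆, K4edge, tauK4,
    ← sub_eq_add_neg]

def g₁ : E₄ → ℤ := Pi.single e₁ 1 + Pi.single e₅ 1 - Pi.single e₃ 1 - Pi.single e₆ 1
def g₂ : E₄ → ℤ := Pi.single e₁ 1 + Pi.single e₄ 1 - Pi.single e₂ 1 - Pi.single e₆ 1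
def g₃ : E₄ → ℤ := Pi.single e₂ 1 + Pi.single e₅ 1 - Pi.single e₃ 1 - Pi.single e₄ 1

theorem g₂_eq : g₂ = g₁ - g₃ := by decide

theorem g₁_mul_g₃_nonneg : ∀ e, 0 ≤ g₁ e * g₃ e := by decide
theorem g₁_mul_g₂_nonneg : ∀ e, 0 ≤ g₁ e * g₂ e := by decide
theorem g₂_mul_neg_g₃_nonneg : ∀ e, 0 ≤ g₂ e * (-g₃) e := by decide

theorem eq_smul_g₁_add_smul_g₃ {b : E₄ → ℤ} (hb : b ∈ incidenceKernel ⊤ tauK4) :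
    b = b e₁ • g₁ + b e₂ • g₃ := by
  rw [mem_incidenceKernel_iff] at hb
  funext e
  have he : e ∈ (Finset.univ : Finset E₄) := Finset.mem_univ e
  rw [univ_edgeSet] at he
  simp only [Finset.mem_insert, Finset.mem_singleton] at he
  rcases he with rfl | rfl | rfl | rfl | rfl | rfl <;>
    simp +decide [g₁, g₃] <;> omega

variable {K : Type*} [Field K]

theorem toricBinomial_smul_g₁_add_smul_g₃_mem (a c : ℤ) :
    (toricBinomial (a • g₁ + c • g₃) : MvPolynomial E₄ K) ∈
      Ideal.span {toricBinomial g₁, toricBinomial g₂, toricBinomial g₃} := by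
  set J : Ideal (MvPolynomial E₄ K) :=
    Ideal.span {toricBinomial g₁, toricBinomial g₂, toricBinomial g₃}
  have h₁ : toricBinomial g₁ ∈ J := Ideal.subset_span (by simp)
  have h₂ : toricBinomial g₂ ∈ J := Ideal.subset_span (by simp)
  have h₃ : toricBinomial g₃ ∈ J := Ideal.subset_span (by simp)
  wlog ha : 0 ≤ a generalizing a c
  · have := this (-a) (-c) (by omega)
    rwa [show (-a) • g₁ + (-c) • g₃ = -(a • g₁ + c • g₃) by module, toricBinomial_neg,
      neg_mem_iff] at this
  rcases le_total 0 c with hc | hc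
  · exact toricBinomial_smul_add_smul_mem g₁_mul_g₃_nonneg h₁ h₃ ha hc
  rcases le_total 0 (a + c) with hac | hac
  · rw [show a • g₁ + c • g₃ = (a + c) • g₁ + (-c) • g₂ by rw [g₂_eq]; module]
    exact toricBinomial_smul_add_smul_mem g₁_mul_g₂_nonneg h₁ h₂ hac (by omega)
  · rw [show a • g₁ + c • g₃ = a • g₂ + (-(a + c)) • -g₃ by rw [g₂_eq]; module]
    exact toricBinomial_smul_add_smul_mem g₂_mul_neg_g₃_nonneg h₂
      (by rw [toricBinomial_neg]; exact neg_mem h₃) ha (by omega)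

theorem toricIdeal_eq :
    toricIdeal K ⊤ tauK4 = Ideal.span {toricBinomial g₁, toricBinomial g₂, toricBinomial g₃} := by
  rw [toricIdeal_eq_span_toricBinomial]
  apply le_antisymm
  · rw [Ideal.span_le]
    rintro _ ⟨b, hb, rfl⟩
    rw [eq_smul_g₁_add_smul_g₃ hb]
    exact toricBinomial_smul_g₁_add_smul_g₃_mem _ _
  · refine Ideal.span_mono ?_
    rintro _ (rfl | rfl | rfl) <;> exact ⟨_, (mem_incidenceKernel_iff _).mpr (by decide), rfl⟩

theorem toricBinomial_g₁ : (toricBinomial g₁ : MvPolynomial E₄ K) = X e₁ * X e₅ - X e₃ * X e₆ := by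
  simp +decide [toricBinomial, prod_edgeSet, g₁]

theorem toricBinomial_g₂ : (toricBinomial g₂ : MvPolynomial E₄ K) = X e₁ * X e₄ - X e₂ * X e₆ := by
  simp +decide [toricBinomial, prod_edgeSet, g₂]

theorem toricBinomial_g₃ : (toricBinomial g₃ : MvPolynomial E₄ K) = X e₂ * X e₅ - X e₃ * X e₄ := by
  simp +decide [toricBinomial, prod_edgeSet, g₃]

theorem toricIdeal_le_vanishingBelow : toricIdeal K ⊤ tauK4 ≤ vanishingBelow 2 := by
  have hquad (a b c d : E₄) : (X a * X b - X c * X d : MvPolynomial E₄ K).IsHomogeneous 2 :=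
    ((isHomogeneous_X K a).mul (isHomogeneous_X K b)).sub
      ((isHomogeneous_X K c).mul (isHomogeneous_X K d))
  rw [toricIdeal_eq, toricBinomial_g₁, toricBinomial_g₂, toricBinomial_g₃, Ideal.span_le]
  rintro _ (rfl | rfl | rfl) <;> exact (hquad _ _ _ _).mem_vanishingBelow

theorem linearIndependent_coeff_toricBinomial :
    LinearIndependent K fun i j : Fin 3 =>
      coeff (![.single e₁ 1 + .single e₅ 1, .single e₁ 1 + .single e₄ 1,
        .single e₂ 1 + .single e₅ 1] j)
        (![toricBinomial g₁, toricBinomial g₂, toricBinomial g₃] i : MvPolynomial E₄ K) := by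
  convert (Pi.basisFun K (Fin 3)).linearIndependent using 1
  funext i j
  fin_cases i <;> fin_cases j <;>
    simp +decide [toricBinomial_g₁, toricBinomial_g₂, toricBinomial_g₃, X,
      monomial_mul, coeff_monomial, Finsupp.single_add_single_eq_single_add_single,
      Finsupp.single_left_inj]

theorem three_le_card_of_span_eq {s : Finset (MvPolynomial E₄ K)}
    (hs : Ideal.span s = toricIdeal K ⊤ tauK4) : 3 ≤ s.card := by
  refine (card_le_card_of_span_eq toricIdeal_le_vanishingBelow _ (fun j => ?_) _ (fun i => ?_)
    linearIndependent_coeff_toricBinomial hs).trans_eq' (Fintype.card_fin 3).symm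
  · fin_cases j <;> simp
  · rw [toricIdeal_eq]
    fin_cases i <;> exact Ideal.subset_span (by simp)

theorem card_edgeSet : Nat.card E₄ = 6 := by
  rw [Nat.card_eq_fintype_card]
  decide

def triangle (v : Fin 4) : (⊤ : SimpleGraph (Fin 4)).Walk v v :=
  .cons (v := v + 1) (by simp) (.cons (v := v + 2) (by simp) (.cons (by simp) .nil))

theorem mu_triangle : ∀ v, mu ⊤ tauK4 (triangle v) = -1 := by
  decide

theorem numBalanced_eq_zero : numBalanced ⊤ tauK4 = 0 :=
  numBalanced_eq_zero_of_forall_exists_mu_ne_one fun v =>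
    ⟨triangle v, by rw [mu_triangle]; decide⟩

end K4

/-- There is a sign τ of K₄ whose toric ideal is not a complete
intersection: with the specific sign above, I_{(K₄,τ)} is minimally generated by the
three binomials e₁e₅ − e₃e₆, e₁e₄ − e₂e₆, e₂e₅ − e₃e₄ (e₁ = v₁v₂, e₂ = v₂v₃,
e₃ = v₁v₃, e₄ = v₁v₄, e₅ = v₂v₄, e₆ = v₃v₄), whereas the height
r(K₄,τ) = |E| − |V| = 2. -/
theorem K4_not_CI (K : Type*) [Field K] :
    toricIdeal K (⊤ : SimpleGraph (Fin 4)) tauK4 =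
      Ideal.span {(X (K4edge 0 1 (by decide)) * X (K4edge 1 3 (by decide))
            - X (K4edge 0 2 (by decide)) * X (K4edge 2 3 (by decide))
              : MvPolynomial (⊤ : SimpleGraph (Fin 4)).edgeSet K),
          X (K4edge 0 1 (by decide)) * X (K4edge 0 3 (by decide))
            - X (K4edge 1 2 (by decide)) * X (K4edge 2 3 (by decide)),
          X (K4edge 1 2 (by decide)) * X (K4edge 1 3 (by decide))
            - X (K4edge 0 2 (by decide)) * X (K4edge 0 3 (by decide))} ∧
    (∀ s : Finset (MvPolynomial (⊤ : SimpleGraph (Fin 4)).edgeSet K),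
      Ideal.span (s : Set (MvPolynomial (⊤ : SimpleGraph (Fin 4)).edgeSet K))
          = toricIdeal K (⊤ : SimpleGraph (Fin 4)) tauK4 → 3 ≤ s.card) ∧
    ((Nat.card (⊤ : SimpleGraph (Fin 4)).edgeSet : ℤ) - Nat.card (Fin 4)
        + numBalanced (⊤ : SimpleGraph (Fin 4)) tauK4 = 2) ∧
    ¬ IsCI K (⊤ : SimpleGraph (Fin 4)) tauK4 := by
  have hheight : (Nat.card (⊤ : SimpleGraph (Fin 4)).edgeSet : ℤ) - Nat.card (Fin 4)
      + numBalanced (⊤ : SimpleGraph (Fin 4)) tauK4 = 2 := by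
    rw [K4.card_edgeSet, K4.numBalanced_eq_zero, Nat.card_eq_fintype_card, Fintype.card_fin]
    rfl
  refine ⟨?_, fun s hs => K4.three_le_card_of_span_eq hs, hheight, ?_⟩
  · rw [K4.toricIdeal_eq, K4.toricBinomial_g₁, K4.toricBinomial_g₂, K4.toricBinomial_g₃]
    rfl
  · rintro ⟨s, hs, hcard⟩
    have := K4.three_le_card_of_span_eq hs
    omega
end
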